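/- In the heterogeneous HK dynamics with r = min_i r_i and c' = lim x_max(t), c = lim x_min(t): c' − c ≤ 2r implies that for all sufficiently large t, every agent's opinion equals either c or c'. -/
import Mathlib


open Finset Filter Topology

/-- Neighbor set of agent `i` given confidence bounds `r` and opinion profile `y`. -/
noncomputable def hkN {n : ℕ} (r : Fin n → ℝ) (y : Fin n → ℝ) (i : Fin n) : Finset (Fin n) :=
  Finset.univ.filter fun j => |y j - y i| ≤ r i

/-- The heterogeneous Hegselmann-Krause update rule. -/
def isHK {n : ℕ} (r : Fin n → ℝ) (x : ℕ → Fin n → ℝ) : Prop :=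
  ∀ t i, x (t + 1) i = (∑ j ∈ hkN r (x t) i, x t j) / ((hkN r (x t) i).card : ℝ)

section aux

variable {n : ℕ}

lemma fin_ne (hn : 0 < n) : Nonempty (Fin n) := ⟨⟨0, hn⟩⟩

lemma mem_hkN' {r y : Fin n → ℝ} {i j : Fin n} : j ∈ hkN r y i ↔ |y j - y i| ≤ r i := by
  simp [hkN]

lemma self_mem_hkN' {r : Fin n → ℝ} (y : Fin n → ℝ) {i : Fin n} (h : 0 ≤ r i) :
    i ∈ hkN r y i := by
  simp [hkN, h]

lemma exists_iInf_eq (hn : 0 < n) (f : Fin n → ℝ) : ∃ j, (⨅ i, f i) = f j := by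
  haveI := fin_ne hn
  obtain ⟨j, hj⟩ := exists_eq_ciInf_of_finite (f := f)
  exact ⟨j, hj.symm⟩

lemma iInf_le'' (hn : 0 < n) (f : Fin n → ℝ) (i : Fin n) : (⨅ j, f j) ≤ f i := by
  haveI := fin_ne hn
  exact ciInf_le (Finite.bddBelow_range f) i

lemma le_iInf'' (hn : 0 < n) (f : Fin n → ℝ) {a : ℝ} (h : ∀ i, a ≤ f i) : a ≤ ⨅ j, f j := by
  haveI := fin_ne hn
  exact le_ciInf h

lemma iInf_neg'' (hn : 0 < n) (f : Fin n → ℝ) : (⨅ i, -(f i)) = -(⨆ i, f i) := by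
  haveI := fin_ne hn
  apply le_antisymm
  · obtain ⟨j, hj⟩ := exists_eq_ciSup_of_finite (f := f)
    have h2 : (⨅ i, -(f i)) ≤ -(f j) := ciInf_le (Finite.bddBelow_range _) j
    rw [← hj]; exact h2
  · exact le_ciInf fun i => neg_le_neg (le_ciSup (Finite.bddAbove_range f) i)

lemma hk_card_pos {r : Fin n → ℝ} (y : Fin n → ℝ) (hr : ∀ i, 0 < r i) (i : Fin n) :
    0 < ((hkN r y i).card : ℝ) := by
  have h : i ∈ hkN r y i := self_mem_hkN' y (hr i).le
  exact_mod_cast Finset.card_pos.mpr ⟨i, h⟩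

lemma hk_card_le (r y : Fin n → ℝ) (i : Fin n) : ((hkN r y i).card : ℝ) ≤ (n : ℝ) := by
  have h := Finset.card_le_univ (hkN r y i)
  rw [Fintype.card_fin] at h
  exact_mod_cast h

lemma hk_sum (r : Fin n → ℝ) (x : ℕ → Fin n → ℝ) (hr : ∀ i, 0 < r i)
    (hHK : isHK r x) (t : ℕ) (i : Fin n) :
    ∑ l ∈ hkN r (x t) i, x t l = ((hkN r (x t) i).card : ℝ) * x (t + 1) i := by
  have hpos := hk_card_pos (x t) hr i
  rw [hHK t i]
  field_simp

lemma sum_lower (N : Finset (Fin n)) (f : Fin n → ℝ) {b : ℝ} (hb : ∀ l, b ≤ f l)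
    {l₀ : Fin n} (hl₀ : l₀ ∈ N) :
    f l₀ + ((N.card : ℝ) - 1) * b ≤ ∑ u ∈ N, f u := by
  have h2 := Finset.card_nsmul_le_sum (N.erase l₀) f b (fun u _ => hb u)
  rw [nsmul_eq_mul] at h2
  have h4 : 1 ≤ N.card := Finset.card_pos.mpr ⟨l₀, hl₀⟩
  have h3 : ((N.erase l₀).card : ℝ) = (N.card : ℝ) - 1 := by
    rw [Finset.card_erase_of_mem hl₀, Nat.cast_sub h4, Nat.cast_one]
  rw [h3] at h2
  rw [← Finset.add_sum_erase _ f hl₀]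
  linarith

lemma isHK_neg (r : Fin n → ℝ) (x : ℕ → Fin n → ℝ) (h : isHK r x) :
    isHK r (fun t i => -(x t i)) := by
  intro t i
  have key : ∀ j : Fin n, |(-(x t j)) - (-(x t i))| = |x t j - x t i| := by
    intro j; rw [neg_sub_neg, abs_sub_comm]
  have hN : hkN r (fun j => -(x t j)) i = hkN r (x t) i := by
    ext j
    simp only [hkN, Finset.mem_filter, Finset.mem_univ, true_and, key j]
  show -(x (t + 1) i) = (∑ j ∈ hkN r (fun j => -(x t j)) i, -(x t j)) /
      ((hkN r (fun j => -(x t j)) i).card : ℝ)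
  rw [hN, h t i, ← neg_div, Finset.sum_neg_distrib]

set_option maxHeartbeats 1000000 in
lemma min_attained (hn : 0 < n) (r : Fin n → ℝ) (x : ℕ → Fin n → ℝ)
    (hr : ∀ i, 0 < r i) (hHK : isHK r x) (c : ℝ)
    (hc : Tendsto (fun t => ⨅ i, x t i) atTop (𝓝 c)) :
    ∃ T, ∀ t, T ≤ t → (⨅ i, x t i) = c := by
  haveI := fin_ne hn
  set m : ℕ → ℝ := fun t => ⨅ i, x t i with hmdef
  have hmle : ∀ t i, m t ≤ x t i := fun t i => iInf_le'' hn (x t) i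
  have hstep : ∀ t i, m t ≤ x (t + 1) i := by
    intro t i
    rw [hHK t i, le_div_iff₀ (hk_card_pos (x t) hr i)]
    have h2 := Finset.card_nsmul_le_sum (hkN r (x t) i) (x t) (m t) (fun u _ => hmle t u)
    rw [nsmul_eq_mul] at h2
    linarith
  have hmono : Monotone m := monotone_nat_of_le_succ (fun t => le_iInf'' hn _ (hstep t))
  have hmc : ∀ t, m t ≤ c := fun t => hmono.ge_of_tendsto hc t
  suffices hex : ∃ t, m t = c by
    obtain ⟨t0, ht0⟩ := hex
    exact ⟨t0, fun t ht => le_antisymm (hmc t) (ht0 ▸ hmono ht)⟩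
  by_contra hno
  push_neg at hno
  have hlt : ∀ t, m t < c := fun t => (hmc t).lt_of_ne (hno t)
  set rmin : ℝ := ⨅ i, r i with hrmindef
  have hrmin : 0 < rmin := by
    obtain ⟨j, hj⟩ := exists_iInf_eq hn r
    rw [hrmindef, hj]; exact hr j
  set nr : ℝ := (n : ℝ) with hnrdef
  have hnr : 1 ≤ nr := by
    rw [hnrdef]; exact_mod_cast hn
  have hnr0 : 0 < nr := lt_of_lt_of_le one_pos hnr
  set η : ℝ := rmin / (4 * nr ^ 2) with hηdef
  have hη : 0 < η := by
    rw [hηdef]; positivity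
  have heq4 : 4 * nr ^ 2 * η = rmin := by
    rw [hηdef]; field_simp
  have hnηr : nr * η ≤ rmin := by nlinarith
  set β : ℝ := c + (nr - 1) * η with hβdef
  set τ : ℝ := c + rmin - η with hτdef
  have hcβ : c ≤ β := by
    rw [hβdef]; nlinarith
  have hβτ : β ≤ τ := by
    rw [hβdef, hτdef]; nlinarith
  obtain ⟨T, hT⟩ : ∃ T : ℕ, ∀ t, T ≤ t → c - η < m t := by
    have h1 : ∀ᶠ t in atTop, c - η < m t :=
      hc.eventually (eventually_gt_nhds (by linarith))
    exact eventually_atTop.mp h1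
  have hlow : ∀ t, T ≤ t → ∀ l, c - η < x t l := fun t ht l =>
    lt_of_lt_of_le (hT t ht) (hmle t l)
  -- Band lemma : at any time ≥ T, no value lies in [β, τ]
  have band : ∀ t, T ≤ t → ∀ l, x t l < β ∨ τ < x t l := by
    intro t ht
    obtain ⟨j, hj⟩ := exists_iInf_eq hn (x (t + 1))
    have hjlt : x (t + 1) j < c := by
      have := hlt (t + 1); rw [hmdef] at this; rw [← hj]; exact this
    have hs := hk_sum r x hr hHK t j
    have hkp := hk_card_pos (x t) hr j
    have hknn := hk_card_le r (x t) j
    have S1 : ∀ l, l ∈ hkN r (x t) j → x t l < β := by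
      intro l hl
      have h1 := sum_lower (hkN r (x t) j) (x t) (fun u => (hlow t ht u).le) hl
      rw [hs] at h1
      have h2 : ((hkN r (x t) j).card : ℝ) * x (t + 1) j
          < ((hkN r (x t) j).card : ℝ) * c := mul_lt_mul_of_pos_left hjlt hkp
      have h3 : 0 ≤ (nr - ((hkN r (x t) j).card : ℝ)) * η :=
        mul_nonneg (by linarith) hη.le
      rw [hβdef]
      nlinarith
    have hjmem := self_mem_hkN' (x t) (hr j).le
    have hjβ := S1 j hjmem
    have hjlow := hlow t ht j
    have hrj : rmin ≤ r j := iInf_le'' hn r j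
    intro l
    by_contra hcon
    push_neg at hcon
    obtain ⟨h1, h2⟩ := hcon
    have hlN : l ∈ hkN r (x t) j := by
      rw [mem_hkN', abs_sub_le_iff]
      constructor
      · rw [hτdef] at h2
        linarith [hlow t ht l]
      · rw [hβdef] at hjβ
        linarith [hlow t ht l, hnηr]
    exact absurd (S1 l hlN) (not_lt.mpr h1)
  -- Uplift : an agent seeing a top agent becomes a top agent
  have uplift : ∀ t, T ≤ t → ∀ i l₀, l₀ ∈ hkN r (x t) i → τ < x t l₀ → τ < x (t + 1) i := by
    intro t ht i l₀ hl₀ hτl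
    have hs := hk_sum r x hr hHK t i
    have hkp := hk_card_pos (x t) hr i
    have hknn := hk_card_le r (x t) i
    have h1 := sum_lower (hkN r (x t) i) (x t) (fun u => (hlow t ht u).le) hl₀
    rw [hs] at h1
    set K : ℝ := ((hkN r (x t) i).card : ℝ) with hKdef
    have h3 : K * (nr * η) ≤ nr * (nr * η) :=
      mul_le_mul_of_nonneg_right hknn (by positivity)
    have hKβ : K * β < K * x (t + 1) i := by
      rw [hβdef, hτdef] at *
      nlinarith [hτl, h1, heq4, hη.le, hkp, hrmin, h3]
    have hβx : β < x (t + 1) i := (mul_lt_mul_iff_right₀ hkp).mp hKβ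
    rcases band (t + 1) (le_trans ht (Nat.le_succ t)) i with h | h
    · linarith
    · exact h
  -- The bottom cluster
  set Bot : ℕ → Finset (Fin n) := fun t => Finset.univ.filter (fun i => x t i < β)
    with hBotdef
  have hBotmem : ∀ t i, i ∈ Bot t ↔ x t i < β := by
    intro t i
    simp only [hBotdef]
    constructor
    · intro h
      exact (Finset.mem_filter.mp h).2
    · intro h
      exact Finset.mem_filter.mpr ⟨Finset.mem_univ i, h⟩
  have hBotmono : ∀ t, T ≤ t → Bot (t + 1) ⊆ Bot t := by
    intro t ht i hi
    rw [hBotmem] at hi ⊢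
    by_contra hcon
    push_neg at hcon
    rcases band t ht i with h | h
    · linarith
    · have h2 := uplift t ht i i (self_mem_hkN' (x t) (hr i).le) h
      linarith
  have hBotne : ∀ t, T ≤ t → (Bot t).Nonempty := by
    intro t ht
    obtain ⟨j, hj⟩ := exists_iInf_eq hn (x t)
    refine ⟨j, (hBotmem t j).mpr ?_⟩
    have h2 := hlt t
    rw [hmdef] at h2
    rw [← hj]
    linarith
  have hchain : ∀ s t, T ≤ s → s ≤ t → Bot t ⊆ Bot s := by
    intro s t hs hst
    induction t, hst using Nat.le_induction with
    | base => exact subset_rfl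
    | succ t ht ih => exact (hBotmono t (le_trans hs ht)).trans ih
  set S : Set ℕ := {k | ∃ t, T ≤ t ∧ (Bot t).card = k} with hSdef
  have hSne : S.Nonempty := ⟨(Bot T).card, T, le_refl T, rfl⟩
  obtain ⟨t₁, ht₁T, ht₁K⟩ : ∃ t, T ≤ t ∧ (Bot t).card = sInf S := Nat.sInf_mem hSne
  have hstab : ∀ t, t₁ ≤ t → Bot t = Bot t₁ := by
    intro t ht
    apply Finset.eq_of_subset_of_card_le (hchain t₁ t ht₁T ht)
    rw [ht₁K]
    exact Nat.sInf_le ⟨t, le_trans ht₁T ht, rfl⟩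
  have hNoTop : ∀ t, t₁ ≤ t → ∀ i, i ∈ Bot t₁ → ∀ l, l ∈ hkN r (x t) i → x t l < β := by
    intro t ht i hi l hl
    rcases band t (le_trans ht₁T ht) l with h | h
    · exact h
    · exfalso
      have h2 := uplift t (le_trans ht₁T ht) i l hl h
      have h3 : i ∈ Bot (t + 1) := by
        rw [hstab (t + 1) (by omega)]; exact hi
      rw [hBotmem] at h3
      linarith
  have hNeq : ∀ t, t₁ ≤ t → ∀ i, i ∈ Bot t₁ → hkN r (x t) i = Bot t₁ := by
    intro t ht i hi
    apply Finset.Subset.antisymm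
    · intro l hl
      rw [← hstab t ht, hBotmem]
      exact hNoTop t ht i hi l hl
    · intro l hl
      rw [← hstab t ht, hBotmem] at hl
      have hiB : x t i < β := by
        have h5 := hi; rw [← hstab t ht, hBotmem] at h5; exact h5
      rw [mem_hkN', abs_sub_le_iff]
      have hl1 := hlow t (le_trans ht₁T ht) l
      have hi1 := hlow t (le_trans ht₁T ht) i
      have hri : rmin ≤ r i := iInf_le'' hn r i
      rw [hβdef] at hl hiB
      constructor
      · linarith [hnηr]
      · linarith [hnηr]
  have hBcard : 0 < ((Bot t₁).card : ℝ) := by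
    exact_mod_cast Finset.card_pos.mpr (hBotne t₁ ht₁T)
  have havg : ∀ t, t₁ ≤ t → ∀ i, i ∈ Bot t₁ →
      x (t + 1) i = (∑ l ∈ Bot t₁, x t l) / ((Bot t₁).card : ℝ) := by
    intro t ht i hi
    rw [hHK t i, hNeq t ht i hi]
  have heqB : ∀ t, t₁ + 1 ≤ t → ∀ i, i ∈ Bot t₁ → ∀ i', i' ∈ Bot t₁ → x t i = x t i' := by
    intro t ht i hi i' hi'
    obtain ⟨s, rfl⟩ : ∃ s, t = s + 1 := ⟨t - 1, by omega⟩
    rw [havg s (by omega) i hi, havg s (by omega) i' hi']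
  have hfroz : ∀ t, t₁ + 1 ≤ t → ∀ i, i ∈ Bot t₁ → x (t + 1) i = x t i := by
    intro t ht i hi
    rw [havg t (by omega) i hi]
    have hconst : ∀ l ∈ Bot t₁, x t l = x t i := fun l hl => heqB t ht l hl i hi
    rw [Finset.sum_congr rfl hconst, Finset.sum_const, nsmul_eq_mul]
    exact mul_div_cancel_left₀ _ (ne_of_gt hBcard)
  obtain ⟨i₀, hi₀⟩ := hBotne t₁ ht₁T
  have hconst2 : ∀ t, t₁ + 1 ≤ t → x t i₀ = x (t₁ + 1) i₀ := by
    intro t ht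
    induction t, ht using Nat.le_induction with
    | base => rfl
    | succ t ht ih => rw [hfroz t ht i₀ hi₀, ih]
  have hmeq : ∀ t, t₁ + 1 ≤ t → m t = x t i₀ := by
    intro t ht
    apply le_antisymm (hmle t i₀)
    apply le_iInf'' hn
    intro i
    by_cases hiB : i ∈ Bot t₁
    · rw [heqB t ht i₀ hi₀ i hiB]
    · have h6 : i ∉ Bot t := by
        rw [hstab t (by omega)]; exact hiB
      rw [hBotmem] at h6
      push_neg at h6
      have hi₀β : x t i₀ < β := by
        have h7 := hi₀
        rw [← hstab t (by omega), hBotmem] at h7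
        exact h7
      linarith
  have hma : ∀ t, t₁ + 1 ≤ t → m t = x (t₁ + 1) i₀ := fun t ht =>
    (hmeq t ht).trans (hconst2 t ht)
  have hca : x (t₁ + 1) i₀ = c := by
    have hev : (fun _ : ℕ => x (t₁ + 1) i₀) =ᶠ[atTop] m :=
      eventually_atTop.mpr ⟨t₁ + 1, fun t ht => (hma t ht).symm⟩
    exact tendsto_nhds_unique (Tendsto.congr' hev tendsto_const_nhds) hc
  have hfin := hlt (t₁ + 1)
  rw [hma (t₁ + 1) (le_refl _), hca] at hfin
  exact lt_irrefl c hfin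

lemma min_gap (hn : 0 < n) (r : Fin n → ℝ) (x : ℕ → Fin n → ℝ)
    (hr : ∀ i, 0 < r i) (hHK : isHK r x) (c : ℝ) (T : ℕ)
    (hm : ∀ t, T ≤ t → (⨅ i, x t i) = c) :
    ∀ t, T ≤ t → ∀ l, x t l = c ∨ c + (⨅ i, r i) < x t l := by
  intro t ht l
  obtain ⟨j, hj⟩ := exists_iInf_eq hn (x (t + 1))
  have hj1 : x (t + 1) j = c := by
    rw [← hj, hm (t + 1) (by omega)]
  have hge : ∀ u, c ≤ x t u := by
    intro u
    rw [← hm t ht]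
    exact iInf_le'' hn (x t) u
  have hs := hk_sum r x hr hHK t j
  have hall : ∀ u ∈ hkN r (x t) j, x t u = c := by
    have h0 : ∑ u ∈ hkN r (x t) j, (x t u - c) = 0 := by
      rw [Finset.sum_sub_distrib, hs, hj1, Finset.sum_const, nsmul_eq_mul]
      ring
    intro u hu
    have h1 := (Finset.sum_eq_zero_iff_of_nonneg
      (fun u _ => sub_nonneg.mpr (hge u))).mp h0 u hu
    linarith [h1]
  have hjc : x t j = c := hall j (self_mem_hkN' (x t) (hr j).le)
  by_cases hcase : x t l ≤ c + r j
  · left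
    apply hall l
    rw [mem_hkN', hjc, abs_le]
    constructor
    · linarith [hge l, hr j]
    · linarith
  · right
    push_neg at hcase
    have h2 : (⨅ i, r i) ≤ r j := iInf_le'' hn r j
    linarith

end aux

theorem stmt_19 (n : ℕ) (hn : 0 < n) (r : Fin n → ℝ) (x : ℕ → Fin n → ℝ)
    (hr : ∀ i, 0 < r i ∧ r i ≤ 1) (hx0 : ∀ i, x 0 i ∈ Set.Icc (0 : ℝ) 1)
    (hHK : isHK r x) (c c' : ℝ)
    (hc : Tendsto (fun t => ⨅ i, x t i) atTop (𝓝 c))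
    (hc' : Tendsto (fun t => ⨆ i, x t i) atTop (𝓝 c'))
    (hgap : c' - c ≤ 2 * ⨅ i, r i) :
    ∃ T : ℕ, ∀ t, T ≤ t → ∀ i, x t i = c ∨ x t i = c' := by
  have hr0 : ∀ i, 0 < r i := fun i => (hr i).1
  obtain ⟨T₁, hT₁⟩ := min_attained hn r x hr0 hHK c hc
  have hHKn := isHK_neg r x hHK
  have hcn : Tendsto (fun t => ⨅ i, -(x t i)) atTop (𝓝 (-c')) := by
    have he : (fun t => ⨅ i, -(x t i)) = fun t => -(⨆ i, x t i) :=
      funext fun t => iInf_neg'' hn (x t)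
    rw [he]
    exact hc'.neg
  obtain ⟨T₂, hT₂⟩ := min_attained hn r (fun t i => -(x t i)) hr0 hHKn (-c') hcn
  have G1 := min_gap hn r x hr0 hHK c T₁ hT₁
  have G2 := min_gap hn r (fun t i => -(x t i)) hr0 hHKn (-c') T₂ hT₂
  refine ⟨max T₁ T₂, fun t ht i => ?_⟩
  rcases G1 t (le_trans (le_max_left _ _) ht) i with h1 | h1
  · exact Or.inl h1
  rcases G2 t (le_trans (le_max_right _ _) ht) i with h2 | h2
  · right
    have h2' : -(x t i) = -c' := h2
    linarith
  · exfalso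
    have h2' : -c' + (⨅ i, r i) < -(x t i) := h2
    linarith
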